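/- Let k be a tensor Markov kernel on (0,1)^d satisfying Assumption SL, with associated hat functions φ_{l,i}. There exists a constant C > 0, depending only on k and d, such that for every n ≥ 2, every truncated sparse grid X_n^TSG of size n, and every function g in the linear span of { φ_{l,i} : c_{l,i} ∈ X_n^TSG } (canonical indices i ∈ ρ(l)): sup_{x ∈ (0,1)^d} |g(x)| ≤ C·(log n)^d · max_{x' ∈ X_n^TSG} |g(x')|. -/

import Mathlib

open Matrix

noncomputable section

/-- The dyadic point `c_{l,i} = i · 2^{-l}`. -/
def cpt (l i : ℕ) : ℝ := (i : ℝ) / 2 ^ l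

/-- The multidimensional dyadic point `c_{l,i}`. -/
def cpoint {d : ℕ} (l i : Fin d → ℕ) : Fin d → ℝ := fun j => cpt (l j) (i j)

/-- The set `ρ(l)` of odd multi-indices associated with the level multi-index `l`. -/
def rho {d : ℕ} (l : Fin d → ℕ) : Set (Fin d → ℕ) :=
  {i | ∀ j, Odd (i j) ∧ 1 ≤ i j ∧ i j ≤ 2 ^ (l j) - 1}

/-- The classical sparse grid of level `τ` in dimension `d`. -/
def SGset (d τ : ℕ) : Set (Fin d → ℝ) :=
  {x | ∃ l : Fin d → ℕ, (∀ j, 1 ≤ l j) ∧ (∑ j, l j) ≤ τ + d - 1 ∧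
    ∀ j, ∃ i : ℕ, 1 ≤ i ∧ i ≤ 2 ^ (l j) - 1 ∧ x j = cpt (l j) i}

/-- A tensor Markov kernel on `(0,1)^d` satisfying Assumption SL: factors
`p_j, q_j` are continuous on `[0,1]`, positive on `(0,1)`, satisfy the strict
"determinant" positivity (the precise form of `p_j/q_j` strictly increasing with
`p_j, q_j > 0`), are continuously differentiable on `(0,1)`, and both solve the
Sturm–Liouville equation `(u_j f')' + v_j f = 0` on `(0,1)`. -/
structure TMKernelSL (d : ℕ) where
  p : Fin d → ℝ → ℝ
  q : Fin d → ℝ → ℝ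
  cont_p : ∀ j, ContinuousOn (p j) (Set.Icc 0 1)
  cont_q : ∀ j, ContinuousOn (q j) (Set.Icc 0 1)
  pos_p : ∀ j, ∀ x ∈ Set.Ioo (0:ℝ) 1, 0 < p j x
  pos_q : ∀ j, ∀ x ∈ Set.Ioo (0:ℝ) 1, 0 < q j x
  det_pos : ∀ j, ∀ y ∈ Set.Icc (0:ℝ) 1, ∀ x ∈ Set.Icc (0:ℝ) 1, y < x →
    0 < p j x * q j y - p j y * q j x
  u : Fin d → ℝ → ℝ
  v : Fin d → ℝ → ℝ
  contDiff_p : ∀ j, ContDiffOn ℝ 1 (p j) (Set.Ioo 0 1)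
  contDiff_q : ∀ j, ContDiffOn ℝ 1 (q j) (Set.Ioo 0 1)
  contDiff_u : ∀ j, ContDiffOn ℝ 1 (u j) (Set.Ioo 0 1)
  cont_v : ∀ j, ContinuousOn (v j) (Set.Ioo 0 1)
  sl_p : ∀ j, ∀ x ∈ Set.Ioo (0:ℝ) 1,
    deriv (fun t => u j t * deriv (p j) t) x + v j x * p j x = 0
  sl_q : ∀ j, ∀ x ∈ Set.Ioo (0:ℝ) 1,
    deriv (fun t => u j t * deriv (q j) t) x + v j x * q j x = 0

/-- The tensor Markov kernel `k(x,x') = ∏_j p_j(min) q_j(max)`. -/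
def TMKernelSL.k {d : ℕ} (κ : TMKernelSL d) (x x' : Fin d → ℝ) : ℝ :=
  ∏ j, κ.p j (min (x j) (x' j)) * κ.q j (max (x j) (x' j))

/-- The `j`-th one-dimensional factor kernel of a TM kernel. -/
def TMKernelSL.k1 {d : ℕ} (κ : TMKernelSL d) (j : Fin d) (a b : ℝ) : ℝ :=
  κ.p j (min a b) * κ.q j (max a b)

/-- Kernel matrix of the design `x_1,…,x_n`. -/
def kerMat {d n : ℕ} (κ : TMKernelSL d) (x : Fin n → Fin d → ℝ) :
    Matrix (Fin n) (Fin n) ℝ :=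
  Matrix.of fun a b => κ.k (x a) (x b)

/-- Kernel vector `k(z) = (k(z,x_1),…,k(z,x_n))`. -/
def kerVec {d n : ℕ} (κ : TMKernelSL d) (x : Fin n → Fin d → ℝ) (z : Fin d → ℝ) :
    Fin n → ℝ :=
  fun a => κ.k z (x a)

/-- `x_1,…,x_n` is a truncated sparse grid design: the points are distinct, and for the level
`τ` with `|X_τ^SG| ≤ n < |X_{τ+1}^SG|`, the design contains all of `X_τ^SG` and is contained
in `X_{τ+1}^SG`. -/
def IsTSGDesign {d n : ℕ} (x : Fin n → Fin d → ℝ) : Prop :=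
  Function.Injective x ∧
  ∃ τ : ℕ, 1 ≤ τ ∧ (SGset d τ).ncard ≤ n ∧ n < (SGset d (τ + 1)).ncard ∧
    SGset d τ ⊆ Set.range x ∧ Set.range x ⊆ SGset d (τ + 1)

/-- One-dimensional quantity `η_{l,i}` (the squared RKHS norm of the hat function). -/
def eta1 (p q : ℝ → ℝ) (l i : ℕ) : ℝ :=
  (p (cpt l (i + 1)) * q (cpt l (i - 1)) - p (cpt l (i - 1)) * q (cpt l (i + 1))) /
    ((p (cpt l i) * q (cpt l (i - 1)) - p (cpt l (i - 1)) * q (cpt l i)) *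
      (p (cpt l (i + 1)) * q (cpt l i) - p (cpt l i) * q (cpt l (i + 1))))

/-- Multidimensional `η_{l,i} = ∏_j η^{(j)}_{l_j,i_j}`. -/
def etaP {d : ℕ} (p q : Fin d → ℝ → ℝ) (l i : Fin d → ℕ) : ℝ :=
  ∏ j, eta1 (p j) (q j) (l j) (i j)

/-- One-dimensional hat function `φ_{l,i}` associated with `p, q`. -/
def phi1 (p q : ℝ → ℝ) (l i : ℕ) (x : ℝ) : ℝ :=
  if cpt l (i - 1) < x ∧ x ≤ cpt l i then
    (p x * q (cpt l (i - 1)) - p (cpt l (i - 1)) * q x) /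
      (p (cpt l i) * q (cpt l (i - 1)) - p (cpt l (i - 1)) * q (cpt l i))
  else if cpt l i < x ∧ x < cpt l (i + 1) then
    (p (cpt l (i + 1)) * q x - p x * q (cpt l (i + 1))) /
      (p (cpt l (i + 1)) * q (cpt l i) - p (cpt l i) * q (cpt l (i + 1)))
  else 0

/-- Multidimensional hat function `φ_{l,i}(x) = ∏_j φ^{(j)}_{l_j,i_j}(x_j)`. -/
def phiD {d : ℕ} (p q : Fin d → ℝ → ℝ) (l i : Fin d → ℕ) (x : Fin d → ℝ) : ℝ :=
  ∏ j, phi1 (p j) (q j) (l j) (i j) (x j)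

/-- The open hyperrectangle `R_{l,i} = ∏_j (c_{l_j,i_j−1}, c_{l_j,i_j+1})`. -/
def hyperRect {d : ℕ} (l i : Fin d → ℕ) : Set (Fin d → ℝ) :=
  {z | ∀ j, cpt (l j) (i j - 1) < z j ∧ z j < cpt (l j) (i j + 1)}

/-- Number of nonzero entries of a real matrix. -/
def nnzM {α β : Type*} [Fintype α] [Fintype β] (M : Matrix α β ℝ) : ℕ :=
  Set.ncard {ab : α × β | M ab.1 ab.2 ≠ 0}

end

/-!
The three-point stencil `f(c) - w₋ f(c - h) - w₊ f(c + h)` at an odd node, with the weights of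
interpolation in `span {p, q}`, annihilates every other odd hat: a coarser hat is a combination
of `p` and `q` across the stencil, while finer and equal-level hats vanish at its points. The
tensor product of these stencils therefore recovers the coefficient of `φ_{l,i}` in `g` from at
most `3^d` values of `g`, taken at `c_{l,i}`, on the boundary (where `g = 0`), or on the coarser
grid `X_τ^SG ⊆ X`; the weights are bounded through the ratio `sup (p + q) / inf (p + q)`. At a
point `z` at most one hat per level multi-index is nonzero, all levels of `X ⊆ X_{τ+1}^SG` lie in
`[1, τ + d]^d`, and `2^τ - 1 ≤ n` gives `τ + d = O(log n)`.
-/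

open Set

section Dyadic

lemma cpt_nonneg (l i : ℕ) : 0 ≤ cpt l i := by
  unfold cpt; positivity

lemma cpt_strictMono (l : ℕ) : StrictMono (cpt l) := fun i i' h => by
  unfold cpt; gcongr

lemma cpt_le_cpt {l i i' : ℕ} (h : i ≤ i') : cpt l i ≤ cpt l i' :=
  (cpt_strictMono l).monotone h

@[simp] lemma cpt_zero_right (l : ℕ) : cpt l 0 = 0 := by simp [cpt]

@[simp] lemma cpt_two_pow (l : ℕ) : cpt l (2 ^ l) = 1 := by simp [cpt]

lemma cpt_mem_Icc {l i : ℕ} (h : i ≤ 2 ^ l) : cpt l i ∈ Icc (0:ℝ) 1 :=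
  ⟨cpt_nonneg l i, cpt_two_pow l ▸ cpt_le_cpt h⟩

lemma cpt_add_mul_two_pow (l r k : ℕ) : cpt (l + r) (k * 2 ^ r) = cpt l k := by
  unfold cpt; push_cast; rw [pow_add]; field_simp

lemma level_le_of_cpt_eq {l l' i i' : ℕ} (hi : Odd i) (h : cpt l i = cpt l' i') : l ≤ l' := by
  by_contra! hlt
  obtain ⟨r, rfl⟩ := Nat.exists_eq_add_of_lt hlt
  rw [← cpt_add_mul_two_pow l' (r + 1) i'] at h
  have : i = i' * 2 ^ (r + 1) := (cpt_strictMono _).injective h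
  exact Nat.not_even_iff_odd.mpr hi (this ▸ (Nat.even_pow.mpr ⟨even_two, by omega⟩).mul_left i')

lemma cpt_le_or_le_of_lt {l' l i : ℕ} (hlt : l' < l) (hi : Odd i) (k : ℕ) :
    cpt l' k ≤ cpt l (i - 1) ∨ cpt l (i + 1) ≤ cpt l' k := by
  obtain ⟨r, rfl⟩ := Nat.exists_eq_add_of_lt hlt
  rw [← cpt_add_mul_two_pow l' (r + 1) k]
  obtain ⟨w, hw⟩ := (Nat.even_pow.mpr ⟨even_two, by omega⟩ : Even (2 ^ (r + 1))).mul_left k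
  obtain ⟨v, rfl⟩ := hi
  rcases le_or_gt (k * 2 ^ (r + 1)) (2 * v) with h | h
  · exact Or.inl (cpt_le_cpt (by omega))
  · exact Or.inr (cpt_le_cpt (by omega))

lemma eq_of_odd_of_mem_Ioo {l i i' : ℕ} {x : ℝ} (hi : Odd i) (hi' : Odd i')
    (hx : x ∈ Ioo (cpt l (i - 1)) (cpt l (i + 1)))
    (hx' : x ∈ Ioo (cpt l (i' - 1)) (cpt l (i' + 1))) : i = i' := by
  obtain ⟨v, rfl⟩ := hi
  obtain ⟨v', rfl⟩ := hi'
  have h1 : cpt l (2 * v) < cpt l (2 * v' + 2) := by simpa using hx.1.trans hx'.2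
  have h2 : cpt l (2 * v') < cpt l (2 * v + 2) := by simpa using hx'.1.trans hx.2
  have := (cpt_strictMono l).lt_iff_lt.mp h1
  have := (cpt_strictMono l).lt_iff_lt.mp h2
  omega

lemma exists_cpt_eq_of_even {l k : ℕ} (hk : Even k) (hk0 : 0 < k) (hkl : k < 2 ^ l) :
    2 ≤ l ∧ ∃ k', 1 ≤ k' ∧ k' ≤ 2 ^ (l - 1) - 1 ∧ cpt l k = cpt (l - 1) k' := by
  obtain ⟨k', rfl⟩ := hk
  have hl : 2 ≤ l := by
    by_contra! h
    interval_cases l <;> simp at hkl <;> omega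
  have hpow : 2 ^ l = 2 ^ (l - 1) * 2 := by rw [← pow_succ]; congr 1; omega
  refine ⟨hl, k', by omega, by omega, ?_⟩
  rw [← cpt_add_mul_two_pow (l - 1) 1 k', Nat.sub_add_cancel (by omega)]
  ring_nf

end Dyadic

section PQ

def pqDet (p q : ℝ → ℝ) (a b : ℝ) : ℝ := p b * q a - p a * q b

/-- With `interpWeightRight`, the weights expressing `f x` through `f a` and `f b` for every
`f ∈ span {p, q}` (`combo_eq_interp`). -/
noncomputable def interpWeightLeft (p q : ℝ → ℝ) (a x b : ℝ) : ℝ := pqDet p q x b / pqDet p q a b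

noncomputable def interpWeightRight (p q : ℝ → ℝ) (a x b : ℝ) : ℝ := pqDet p q a x / pqDet p q a b

def DetPos (p q : ℝ → ℝ) : Prop :=
  ∀ ⦃a⦄, a ∈ Icc (0:ℝ) 1 → ∀ ⦃b⦄, b ∈ Icc (0:ℝ) 1 → a < b → 0 < pqDet p q a b

variable {p q : ℝ → ℝ}

lemma combo_eq_interp {a b : ℝ} (hab : pqDet p q a b ≠ 0) (α β x : ℝ) :
    α * p x + β * q x =
      interpWeightLeft p q a x b * (α * p a + β * q a) +
        interpWeightRight p q a x b * (α * p b + β * q b) := by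
  unfold interpWeightLeft interpWeightRight
  field_simp
  unfold pqDet
  ring

lemma interpWeightLeft_eq_combo (a x b : ℝ) :
    interpWeightLeft p q a x b = -q b / pqDet p q a b * p x + p b / pqDet p q a b * q x := by
  unfold interpWeightLeft pqDet; ring

lemma interpWeightRight_eq_combo (a x b : ℝ) :
    interpWeightRight p q a x b = q a / pqDet p q a b * p x + -p a / pqDet p q a b * q x := by
  unfold interpWeightRight pqDet; ring

lemma one_le_of_forall_add_le_mul_add {Cs : ℝ} (hs : ∀ y ∈ Icc (0:ℝ) 1, 0 < p y + q y)
    (hCs : ∀ y ∈ Icc (0:ℝ) 1, ∀ y' ∈ Icc (0:ℝ) 1, p y + q y ≤ Cs * (p y' + q y')) : 1 ≤ Cs := by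
  have h0 : (0:ℝ) ∈ Icc (0:ℝ) 1 := ⟨le_rfl, zero_le_one⟩
  exact le_of_mul_le_mul_right (by simpa using hCs 0 h0 0 h0) (hs 0 h0)

variable (hdet : DetPos p q)
include hdet

lemma pqDet_nonneg {a b : ℝ} (ha : a ∈ Icc (0:ℝ) 1) (hb : b ∈ Icc (0:ℝ) 1) (hab : a ≤ b) :
    0 ≤ pqDet p q a b := by
  rcases hab.eq_or_lt with rfl | hab
  · simp [pqDet]
  · exact (hdet ha hb hab).le

variable {a x b : ℝ} (ha : a ∈ Icc (0:ℝ) 1) (hx : x ∈ Icc (0:ℝ) 1) (hb : b ∈ Icc (0:ℝ) 1)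
  (hax : a ≤ x) (hxb : x ≤ b)
include ha hx hb hax hxb

lemma interpWeightLeft_nonneg : 0 ≤ interpWeightLeft p q a x b :=
  div_nonneg (pqDet_nonneg hdet hx hb hxb) (pqDet_nonneg hdet ha hb (hax.trans hxb))

lemma interpWeightRight_nonneg : 0 ≤ interpWeightRight p q a x b :=
  div_nonneg (pqDet_nonneg hdet ha hx hax) (pqDet_nonneg hdet ha hb (hax.trans hxb))

/-- Interpolating the positive function `p + q` bounds both weights by the ratio constant. -/
lemma interpWeight_le {Cs : ℝ} (hs : ∀ y ∈ Icc (0:ℝ) 1, 0 < p y + q y)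
    (hCs : ∀ y ∈ Icc (0:ℝ) 1, ∀ y' ∈ Icc (0:ℝ) 1, p y + q y ≤ Cs * (p y' + q y'))
    (hab : a < b) :
    interpWeightLeft p q a x b ≤ Cs ∧ interpWeightRight p q a x b ≤ Cs := by
  have hsum := combo_eq_interp (hdet ha hb hab).ne' 1 1 x
  simp only [one_mul] at hsum
  have hL := interpWeightLeft_nonneg hdet ha hx hb hax hxb
  have hR := interpWeightRight_nonneg hdet ha hx hb hax hxb
  have hsa := hs a ha
  have hsb := hs b hb
  constructor
  · refine le_of_mul_le_mul_right ?_ hsa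
    nlinarith [hCs x hx a ha, mul_nonneg hR hsb.le]
  · refine le_of_mul_le_mul_right ?_ hsb
    nlinarith [hCs x hx b hb, mul_nonneg hL hsa.le]

end PQ

section Hat

variable {p q : ℝ → ℝ} {l i : ℕ} {x : ℝ}

lemma phi1_eq_zero_of_le (h : x ≤ cpt l (i - 1)) : phi1 p q l i x = 0 := by
  have : cpt l (i - 1) ≤ cpt l i := cpt_le_cpt (by omega)
  unfold phi1
  rw [if_neg (by rintro ⟨h1, -⟩; linarith), if_neg (by rintro ⟨h1, -⟩; linarith)]

lemma phi1_eq_zero_of_ge (h : cpt l (i + 1) ≤ x) : phi1 p q l i x = 0 := by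
  have : cpt l i < cpt l (i + 1) := cpt_strictMono l (by omega)
  unfold phi1
  rw [if_neg (by rintro ⟨-, h2⟩; linarith), if_neg (by rintro ⟨-, h2⟩; linarith)]

lemma mem_Ioo_of_phi1_ne_zero (h : phi1 p q l i x ≠ 0) :
    x ∈ Ioo (cpt l (i - 1)) (cpt l (i + 1)) := by
  by_contra hx
  rcases not_and_or.mp hx with h1 | h1
  · exact h (phi1_eq_zero_of_le (not_lt.mp h1))
  · exact h (phi1_eq_zero_of_ge (not_lt.mp h1))

lemma phi1_eq_interpWeightRight (hx : x ∈ Icc (cpt l (i - 1)) (cpt l i)) :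
    phi1 p q l i x = interpWeightRight p q (cpt l (i - 1)) x (cpt l i) := by
  rcases hx.1.eq_or_lt with rfl | hlt
  · simp [phi1_eq_zero_of_le, interpWeightRight, pqDet]
  · rw [phi1, if_pos ⟨hlt, hx.2⟩]
    rfl

variable (hdet : DetPos p q)
include hdet

lemma phi1_cpt_self (hi : 0 < i) (hil : i < 2 ^ l) : phi1 p q l i (cpt l i) = 1 := by
  rw [phi1_eq_interpWeightRight ⟨cpt_le_cpt (by omega), le_rfl⟩, interpWeightRight]
  exact div_self (hdet (cpt_mem_Icc (by omega)) (cpt_mem_Icc hil.le)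
    (cpt_strictMono l (by omega))).ne'

lemma phi1_eq_interpWeightLeft (hi : 0 < i) (hil : i < 2 ^ l)
    (hx : x ∈ Icc (cpt l i) (cpt l (i + 1))) :
    phi1 p q l i x = interpWeightLeft p q (cpt l i) x (cpt l (i + 1)) := by
  rcases hx.1.eq_or_lt with rfl | hlt
  · rw [phi1_cpt_self hdet hi hil, interpWeightLeft, div_self (hdet
      (cpt_mem_Icc hil.le) (cpt_mem_Icc hil) (cpt_strictMono l (by omega))).ne']
  rcases hx.2.eq_or_lt with rfl | hlt'
  · simp [phi1_eq_zero_of_ge, interpWeightLeft, pqDet]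
  · rw [phi1, if_neg (by rintro ⟨-, h⟩; linarith), if_pos ⟨hlt, hlt'⟩]
    rfl

lemma phi1_cpt_of_same_level (hi : 0 < i) (hil : i < 2 ^ l) (k : ℕ) :
    phi1 p q l i (cpt l k) = if k = i then 1 else 0 := by
  rcases lt_trichotomy k i with h | rfl | h
  · rw [if_neg h.ne, phi1_eq_zero_of_le (cpt_le_cpt (by omega))]
  · rw [if_pos rfl, phi1_cpt_self hdet hi hil]
  · rw [if_neg h.ne', phi1_eq_zero_of_ge (cpt_le_cpt (by omega))]

lemma phi1_cpt_of_level_le {l' i' : ℕ} (hl : l ≤ l') (hi' : Odd i') (hil' : i' < 2 ^ l')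
    (k : ℕ) : phi1 p q l' i' (cpt l k) = if l' = l ∧ i' = k then 1 else 0 := by
  obtain ⟨r, rfl⟩ := Nat.exists_eq_add_of_le hl
  rw [← cpt_add_mul_two_pow l r k, phi1_cpt_of_same_level hdet hi'.pos hil']
  rcases Nat.eq_zero_or_pos r with rfl | hr
  · simp [eq_comm]
  · have heven : Even (k * 2 ^ r) := (Nat.even_pow.mpr ⟨even_two, hr.ne'⟩).mul_left k
    rw [if_neg (fun h : k * 2 ^ r = i' => Nat.not_even_iff_odd.mpr hi' (h ▸ heven)),
      if_neg (by omega)]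

lemma phi1_exists_combo (hi : 0 < i) (hil : i < 2 ^ l) {a b : ℝ}
    (hsep : ∀ k, cpt l k ≤ a ∨ b ≤ cpt l k) :
    ∃ α β : ℝ, ∀ x ∈ Icc a b, phi1 p q l i x = α * p x + β * q x := by
  rcases hsep (i - 1) with h0 | h0
  swap
  · exact ⟨0, 0, fun x hx => by simp [phi1_eq_zero_of_le (hx.2.trans h0)]⟩
  rcases hsep i with h1 | h1
  swap
  · exact ⟨_, _, fun x hx => by
      rw [phi1_eq_interpWeightRight ⟨h0.trans hx.1, hx.2.trans h1⟩, interpWeightRight_eq_combo]⟩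
  rcases hsep (i + 1) with h2 | h2
  · exact ⟨0, 0, fun x hx => by simp [phi1_eq_zero_of_ge (h2.trans hx.1)]⟩
  · exact ⟨_, _, fun x hx => by
      rw [phi1_eq_interpWeightLeft hdet hi hil ⟨h1.trans hx.1, hx.2.trans h2⟩,
        interpWeightLeft_eq_combo]⟩

lemma phi1_mem_Icc {Cs : ℝ} (hs : ∀ y ∈ Icc (0:ℝ) 1, 0 < p y + q y)
    (hCs : ∀ y ∈ Icc (0:ℝ) 1, ∀ y' ∈ Icc (0:ℝ) 1, p y + q y ≤ Cs * (p y' + q y'))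
    (hi : 0 < i) (hil : i < 2 ^ l) (hx : x ∈ Icc (0:ℝ) 1) :
    phi1 p q l i x ∈ Icc 0 Cs := by
  have ha : cpt l (i - 1) ∈ Icc (0:ℝ) 1 := cpt_mem_Icc (by omega)
  have hc : cpt l i ∈ Icc (0:ℝ) 1 := cpt_mem_Icc hil.le
  have hb : cpt l (i + 1) ∈ Icc (0:ℝ) 1 := cpt_mem_Icc hil
  have hCs0 : 0 ≤ Cs := zero_le_one.trans (one_le_of_forall_add_le_mul_add hs hCs)
  rcases le_or_gt x (cpt l (i - 1)) with h0 | h0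
  · simp [phi1_eq_zero_of_le h0, hCs0]
  rcases le_or_gt x (cpt l i) with h1 | h1
  · rw [phi1_eq_interpWeightRight ⟨h0.le, h1⟩]
    exact ⟨interpWeightRight_nonneg hdet ha hx hc h0.le h1,
      (interpWeight_le hdet ha hx hc h0.le h1 hs hCs (h0.trans_le h1)).2⟩
  rcases le_or_gt x (cpt l (i + 1)) with h2 | h2
  · rw [phi1_eq_interpWeightLeft hdet hi hil ⟨h1.le, h2⟩]
    exact ⟨interpWeightLeft_nonneg hdet hc hx hb h1.le h2,
      (interpWeight_le hdet hc hx hb h1.le h2 hs hCs (h1.trans_le h2)).1⟩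
  · simp [phi1_eq_zero_of_ge h2.le, hCs0]

end Hat

section Stencil

def stencilIdx (i : ℕ) : Fin 3 → ℕ := ![i, i - 1, i + 1]

noncomputable def stencilWeight (p q : ℝ → ℝ) (l i : ℕ) : Fin 3 → ℝ :=
  ![1, -interpWeightLeft p q (cpt l (i - 1)) (cpt l i) (cpt l (i + 1)),
    -interpWeightRight p q (cpt l (i - 1)) (cpt l i) (cpt l (i + 1))]

variable {p q : ℝ → ℝ}

lemma sum_stencilWeight_mul (l i : ℕ) (f : ℝ → ℝ) :
    ∑ e, stencilWeight p q l i e * f (cpt l (stencilIdx i e)) =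
      f (cpt l i)
        - interpWeightLeft p q (cpt l (i - 1)) (cpt l i) (cpt l (i + 1)) * f (cpt l (i - 1))
        - interpWeightRight p q (cpt l (i - 1)) (cpt l i) (cpt l (i + 1)) * f (cpt l (i + 1)) := by
  simp [Fin.sum_univ_three, stencilWeight, stencilIdx]
  ring

variable (hdet : DetPos p q)
include hdet

lemma sum_abs_stencilWeight_le {Cs : ℝ} (hs : ∀ y ∈ Icc (0:ℝ) 1, 0 < p y + q y)
    (hCs : ∀ y ∈ Icc (0:ℝ) 1, ∀ y' ∈ Icc (0:ℝ) 1, p y + q y ≤ Cs * (p y' + q y'))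
    {l i : ℕ} (hi : 0 < i) (hil : i < 2 ^ l) :
    ∑ e, |stencilWeight p q l i e| ≤ 1 + 2 * Cs := by
  have ha : cpt l (i - 1) ∈ Icc (0:ℝ) 1 := cpt_mem_Icc (by omega)
  have hc : cpt l i ∈ Icc (0:ℝ) 1 := cpt_mem_Icc hil.le
  have hb : cpt l (i + 1) ∈ Icc (0:ℝ) 1 := cpt_mem_Icc hil
  have hac : cpt l (i - 1) ≤ cpt l i := cpt_le_cpt (by omega)
  have hcb : cpt l i ≤ cpt l (i + 1) := cpt_le_cpt (by omega)
  obtain ⟨hL, hR⟩ := interpWeight_le hdet ha hc hb hac hcb hs hCs (cpt_strictMono l (by omega))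
  simp only [Fin.sum_univ_three, stencilWeight, Matrix.cons_val_zero, Matrix.cons_val_one,
    Matrix.cons_val_two, Matrix.head_cons, Matrix.tail_cons, abs_one, abs_neg,
    abs_of_nonneg (interpWeightLeft_nonneg hdet ha hc hb hac hcb),
    abs_of_nonneg (interpWeightRight_nonneg hdet ha hc hb hac hcb)]
  linarith

lemma sum_stencilWeight_mul_phi1 {l i l' i' : ℕ} (hi : Odd i) (hil : i < 2 ^ l)
    (hi' : Odd i') (hil' : i' < 2 ^ l') :
    ∑ e, stencilWeight p q l i e * phi1 p q l' i' (cpt l (stencilIdx i e)) =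
      if l' = l ∧ i' = i then 1 else 0 := by
  rw [sum_stencilWeight_mul]
  rcases lt_or_ge l' l with hlt | hle
  · obtain ⟨α, β, hαβ⟩ := phi1_exists_combo hdet hi'.pos hil' (cpt_le_or_le_of_lt hlt hi)
    have hac : cpt l (i - 1) ≤ cpt l i := cpt_le_cpt (by omega)
    have hcb : cpt l i ≤ cpt l (i + 1) := cpt_le_cpt (by omega)
    have hD : pqDet p q (cpt l (i - 1)) (cpt l (i + 1)) ≠ 0 :=
      (hdet (cpt_mem_Icc (by omega)) (cpt_mem_Icc hil) (cpt_strictMono l (by omega))).ne'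
    rw [hαβ _ ⟨le_rfl, hac.trans hcb⟩, hαβ _ ⟨hac, hcb⟩, hαβ _ ⟨hac.trans hcb, le_rfl⟩,
      combo_eq_interp hD α β (cpt l i), if_neg (by omega)]
    ring
  · obtain ⟨v, rfl⟩ := hi
    obtain ⟨v', rfl⟩ := hi'
    have hleft : ¬(l' = l ∧ 2 * v' + 1 = 2 * v + 1 - 1) := by omega
    have hright : ¬(l' = l ∧ 2 * v' + 1 = 2 * v + 1 + 1) := by omega
    simp only [phi1_cpt_of_level_le hdet hle ⟨v', rfl⟩ hil', if_neg hleft, if_neg hright]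
    ring

end Stencil

section Tensor

variable {d : ℕ}

lemma lt_two_pow_of_mem_rho {l i : Fin d → ℕ} (h : i ∈ rho l) (j : Fin d) : i j < 2 ^ l j := by
  have := h j
  have := Nat.one_le_two_pow (n := l j)
  omega

noncomputable def stencilPoint (l i : Fin d → ℕ) (ε : Fin d → Fin 3) : Fin d → ℝ :=
  fun j => cpt (l j) (stencilIdx (i j) (ε j))

/-- On the span of odd hats this returns the coefficient of `φ_{l,i}`
(`hierarchicalSurplus_phiD`). -/
noncomputable def hierarchicalSurplus (p q : Fin d → ℝ → ℝ) (l i : Fin d → ℕ)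
    (g : (Fin d → ℝ) → ℝ) : ℝ :=
  ∑ ε : Fin d → Fin 3, (∏ j, stencilWeight (p j) (q j) (l j) (i j) (ε j)) * g (stencilPoint l i ε)

variable {p q : Fin d → ℝ → ℝ}

lemma hierarchicalSurplus_sum {ι : Type*} (s : Finset ι) (a : ι → ℝ)
    (f : ι → (Fin d → ℝ) → ℝ) (l i : Fin d → ℕ) :
    hierarchicalSurplus p q l i (fun x => ∑ t ∈ s, a t * f t x) =
      ∑ t ∈ s, a t * hierarchicalSurplus p q l i (f t) := by
  unfold hierarchicalSurplus
  simp_rw [Finset.mul_sum]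
  rw [Finset.sum_comm]
  refine Finset.sum_congr rfl fun t _ => Finset.sum_congr rfl fun ε _ => ?_
  ring

lemma abs_hierarchicalSurplus_le {l i : Fin d → ℕ} {g : (Fin d → ℝ) → ℝ} {B : ℝ}
    (hB : ∀ ε, |g (stencilPoint l i ε)| ≤ B) :
    |hierarchicalSurplus p q l i g| ≤
      (∏ j, ∑ e, |stencilWeight (p j) (q j) (l j) (i j) e|) * B := by
  rw [Fintype.prod_sum, Finset.sum_mul]
  refine (Finset.abs_sum_le_sum_abs _ _).trans (Finset.sum_le_sum fun ε _ => ?_)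
  rw [abs_mul, Finset.abs_prod]
  exact mul_le_mul_of_nonneg_left (hB ε) (Finset.prod_nonneg fun j _ => abs_nonneg _)

lemma hierarchicalSurplus_phiD (hdet : ∀ j, DetPos (p j) (q j))
    {l i l' i' : Fin d → ℕ} (hi : i ∈ rho l) (hi' : i' ∈ rho l') :
    hierarchicalSurplus p q l i (phiD p q l' i') = if l' = l ∧ i' = i then 1 else 0 := by
  unfold hierarchicalSurplus phiD stencilPoint
  simp_rw [← Finset.prod_mul_distrib]
  rw [← Fintype.prod_sum (fun j (e : Fin 3) => stencilWeight (p j) (q j) (l j) (i j) e *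
    phi1 (p j) (q j) (l' j) (i' j) (cpt (l j) (stencilIdx (i j) e)))]
  simp_rw [sum_stencilWeight_mul_phi1 (hdet _) (hi _).1 (lt_two_pow_of_mem_rho hi _)
    (hi' _).1 (lt_two_pow_of_mem_rho hi' _)]
  rw [Finset.prod_boole]
  simp [funext_iff, forall_and]

end Tensor

section HatSpan

variable {d : ℕ} {p q : Fin d → ℝ → ℝ}

lemma abs_sum_mul_le_card_filter_mul {ι : Type*} (s : Finset ι) {c f : ι → ℝ} {A B : ℝ}
    (hc : ∀ t ∈ s, |c t| ≤ A) (hf : ∀ t ∈ s, |f t| ≤ B) :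
    |∑ t ∈ s, c t * f t| ≤ (s.filter (fun t => f t ≠ 0)).card * (A * B) := by
  rw [← Finset.sum_filter_of_ne (p := fun t => f t ≠ 0) fun t _ h => right_ne_zero_of_mul h,
    ← nsmul_eq_mul]
  refine (Finset.abs_sum_le_sum_abs _ _).trans (Finset.sum_le_card_nsmul _ _ _ fun t ht => ?_)
  have ht := (Finset.mem_filter.mp ht).1
  rw [abs_mul]
  exact mul_le_mul (hc t ht) (hf t ht) (abs_nonneg _) ((abs_nonneg _).trans (hc t ht))

lemma abs_phiD_le {Cs : Fin d → ℝ} (hdet : ∀ j, DetPos (p j) (q j))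
    (hs : ∀ j, ∀ y ∈ Icc (0:ℝ) 1, 0 < p j y + q j y)
    (hCs : ∀ j, ∀ y ∈ Icc (0:ℝ) 1, ∀ y' ∈ Icc (0:ℝ) 1, p j y + q j y ≤ Cs j * (p j y' + q j y'))
    {l i : Fin d → ℕ} (hi : i ∈ rho l) {z : Fin d → ℝ} (hz : ∀ j, z j ∈ Icc (0:ℝ) 1) :
    |phiD p q l i z| ≤ ∏ j, Cs j := by
  rw [phiD, Finset.abs_prod]
  refine Finset.prod_le_prod (fun j _ => abs_nonneg _) fun j _ => ?_
  have h := phi1_mem_Icc (hdet j) (hs j) (hCs j) (hi j).1.pos (lt_two_pow_of_mem_rho hi j) (hz j)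
  rw [abs_of_nonneg h.1]
  exact h.2

lemma card_filter_phiD_ne_zero_le {S : Finset ((Fin d → ℕ) × (Fin d → ℕ))} {N : ℕ}
    (hS : ∀ pr ∈ S, (∀ j, 1 ≤ pr.1 j ∧ pr.1 j ≤ N) ∧ ∀ j, Odd (pr.2 j)) (z : Fin d → ℝ) :
    (S.filter (fun pr => phiD p q pr.1 pr.2 z ≠ 0)).card ≤ N ^ d := by
  have hsupp : ∀ pr ∈ S.filter (fun pr => phiD p q pr.1 pr.2 z ≠ 0), ∀ j,
      z j ∈ Ioo (cpt (pr.1 j) (pr.2 j - 1)) (cpt (pr.1 j) (pr.2 j + 1)) := fun pr hpr j =>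
    mem_Ioo_of_phi1_ne_zero (Finset.prod_ne_zero_iff.mp (Finset.mem_filter.mp hpr).2 j
      (Finset.mem_univ j))
  calc _ ≤ (Fintype.piFinset fun _ : Fin d => Finset.Icc 1 N).card := by
        refine Finset.card_le_card_of_injOn Prod.fst (fun pr hpr => ?_) fun pr hpr pr' hpr' h => ?_
        · exact Fintype.mem_piFinset.mpr fun j =>
            Finset.mem_Icc.mpr ((hS pr (Finset.mem_filter.mp hpr).1).1 j)
        · have hodd := (hS pr (Finset.mem_filter.mp hpr).1).2
          have hodd' := (hS pr' (Finset.mem_filter.mp hpr').1).2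
          refine Prod.ext h (funext fun j => eq_of_odd_of_mem_Ioo (hodd j) (hodd' j)
            (hsupp pr hpr j) ?_)
          simpa [h] using hsupp pr' hpr' j
    _ = N ^ d := by simp

variable {m : ℕ} (L Idx : Fin m → Fin d → ℕ) (a : Fin m → ℝ)

lemma hierarchicalSurplus_hatSum (hdet : ∀ j, DetPos (p j) (q j))
    (hT : ∀ t, Idx t ∈ rho (L t)) {l i : Fin d → ℕ} (hi : i ∈ rho l) :
    hierarchicalSurplus p q l i (fun x => ∑ t, a t * phiD p q (L t) (Idx t) x) =
      ∑ t with (L t, Idx t) = (l, i), a t := by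
  rw [hierarchicalSurplus_sum, Finset.sum_filter]
  refine Finset.sum_congr rfl fun t _ => ?_
  rw [hierarchicalSurplus_phiD hdet hi (hT t)]
  split_ifs <;> simp_all [Prod.ext_iff]

lemma hatSum_eq_sum_hierarchicalSurplus (hdet : ∀ j, DetPos (p j) (q j))
    (hT : ∀ t, Idx t ∈ rho (L t)) (z : Fin d → ℝ) :
    ∑ t, a t * phiD p q (L t) (Idx t) z =
      ∑ pr ∈ Finset.univ.image (fun t => (L t, Idx t)),
        hierarchicalSurplus p q pr.1 pr.2 (fun x => ∑ t, a t * phiD p q (L t) (Idx t) x) *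
          phiD p q pr.1 pr.2 z := by
  refine (Finset.sum_image' _ fun t _ => ?_).symm
  rw [hierarchicalSurplus_hatSum L Idx a hdet hT (hT t), Finset.sum_mul]
  refine Finset.sum_congr rfl fun s hs => ?_
  obtain ⟨hL, hI⟩ := Prod.ext_iff.mp (Finset.mem_filter.mp hs).2
  rw [← hL, ← hI]

end HatSpan

section SparseGrid

variable {d : ℕ}

lemma sum_le_of_cpoint_mem_SGset {l i : Fin d → ℕ} {τ : ℕ} (hi : ∀ j, Odd (i j))
    (h : cpoint l i ∈ SGset d τ) : ∑ j, l j ≤ τ + d - 1 := by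
  obtain ⟨l', -, hsum, hl'⟩ := h
  refine le_trans (Finset.sum_le_sum fun j _ => ?_) hsum
  obtain ⟨k, -, -, hk⟩ := hl' j
  exact level_le_of_cpt_eq (hi j) hk

lemma exists_level_le_cpt_stencilIdx_eq {l i : ℕ} (hl : 1 ≤ l) (hi : Odd i) (e : Fin 3)
    (h0 : 0 < stencilIdx i e) (hlt : stencilIdx i e < 2 ^ l) :
    ∃ l' ≤ l, (e ≠ 0 → l' < l) ∧ 1 ≤ l' ∧
      ∃ k, 1 ≤ k ∧ k ≤ 2 ^ l' - 1 ∧ cpt l (stencilIdx i e) = cpt l' k := by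
  have heven : e ≠ 0 → Even (stencilIdx i e) := by
    obtain ⟨v, rfl⟩ := hi
    fin_cases e <;> simp [stencilIdx]
    exact ⟨v + 1, by ring⟩
  by_cases he : e = 0
  · subst he
    have : i < 2 ^ l := hlt
    exact ⟨l, le_rfl, fun h => absurd rfl h, hl, i, h0, by omega, rfl⟩
  · obtain ⟨hl2, k, hk1, hk2, hk⟩ := exists_cpt_eq_of_even (heven he) h0 hlt
    exact ⟨l - 1, by omega, fun _ => by omega, by omega, k, hk1, hk2, hk⟩

lemma stencilPoint_trichotomy {τ : ℕ} {l i : Fin d → ℕ} (hl : ∀ j, 1 ≤ l j) (hi : i ∈ rho l)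
    (hlev : ∑ j, l j ≤ τ + d) (ε : Fin d → Fin 3) :
    stencilPoint l i ε = cpoint l i ∨ (∃ j, stencilPoint l i ε j = 0 ∨ stencilPoint l i ε j = 1) ∨
      stencilPoint l i ε ∈ SGset d τ := by
  by_cases hε : ε = 0
  · left
    funext j
    simp [stencilPoint, cpoint, stencilIdx, hε]
  right
  by_cases hbd : ∃ j, stencilIdx (i j) (ε j) = 0 ∨ stencilIdx (i j) (ε j) = 2 ^ l j
  · obtain ⟨j, hj⟩ := hbd
    left
    refine ⟨j, ?_⟩
    rcases hj with hj | hj <;> simp [stencilPoint, hj]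
  right
  simp only [not_exists, not_or] at hbd
  have hint : ∀ j, 0 < stencilIdx (i j) (ε j) ∧ stencilIdx (i j) (ε j) < 2 ^ l j := by
    intro j
    refine ⟨Nat.pos_of_ne_zero (hbd j).1, lt_of_le_of_ne ?_ (hbd j).2⟩
    have := lt_two_pow_of_mem_rho hi j
    have hle : ∀ e : Fin 3, stencilIdx (i j) e ≤ 2 ^ l j := by
      intro e; fin_cases e <;> simp [stencilIdx] <;> omega
    exact hle (ε j)
  choose l' hl'le hl'lt hl'1 k hk using fun j =>
    exists_level_le_cpt_stencilIdx_eq (hl j) (hi j).1 (ε j) (hint j).1 (hint j).2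
  obtain ⟨j₀, hj₀⟩ := Function.ne_iff.mp hε
  have hsum : ∑ j, l' j < ∑ j, l j :=
    Finset.sum_lt_sum (fun j _ => hl'le j) ⟨j₀, Finset.mem_univ _, hl'lt j₀ hj₀⟩
  exact ⟨l', hl'1, by omega, fun j => ⟨k j, (hk j).1, (hk j).2.1, (hk j).2.2⟩⟩

lemma phiD_eq_zero_of_boundary {p q : Fin d → ℝ → ℝ} {l i : Fin d → ℕ} (hi : i ∈ rho l)
    {x : Fin d → ℝ} (hx : ∃ j, x j = 0 ∨ x j = 1) : phiD p q l i x = 0 := by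
  obtain ⟨j, hj⟩ := hx
  refine Finset.prod_eq_zero (Finset.mem_univ j) ?_
  rcases hj with hj | hj <;> rw [hj]
  · exact phi1_eq_zero_of_le (cpt_nonneg _ _)
  · exact phi1_eq_zero_of_ge (cpt_two_pow (l j) ▸ cpt_le_cpt (lt_two_pow_of_mem_rho hi j))

lemma abs_hatSum_stencilPoint_le {p q : Fin d → ℝ → ℝ} {m : ℕ} {L Idx : Fin m → Fin d → ℕ}
    {a : Fin m → ℝ} (hT : ∀ t, Idx t ∈ rho (L t)) {X : Finset (Fin d → ℝ)} {τ : ℕ}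
    (hX : SGset d τ ⊆ X) {Bd : ℝ} (hBd0 : 0 ≤ Bd)
    (hBd : ∀ y ∈ X, |∑ t, a t * phiD p q (L t) (Idx t) y| ≤ Bd)
    {l i : Fin d → ℕ} (hl : ∀ j, 1 ≤ l j) (hi : i ∈ rho l) (hlev : ∑ j, l j ≤ τ + d)
    (hc : cpoint l i ∈ X) (ε : Fin d → Fin 3) :
    |∑ t, a t * phiD p q (L t) (Idx t) (stencilPoint l i ε)| ≤ Bd := by
  rcases stencilPoint_trichotomy hl hi hlev ε with h | h | h
  · exact h ▸ hBd _ hc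
  · simpa [phiD_eq_zero_of_boundary (hT _) h] using hBd0
  · exact hBd _ (hX h)

lemma two_pow_sub_one_le_card (hd : 1 ≤ d) {τ : ℕ} {X : Finset (Fin d → ℝ)}
    (hX : SGset d τ ⊆ X) : 2 ^ τ - 1 ≤ X.card := by
  let j₀ : Fin d := ⟨0, hd⟩
  let axisPoint (k : ℕ) : Fin d → ℝ := Function.update (fun _ => cpt 1 1) j₀ (cpt τ (k + 1))
  calc 2 ^ τ - 1 = (Finset.range (2 ^ τ - 1)).card := (Finset.card_range _).symm
    _ ≤ X.card := by
      refine Finset.card_le_card_of_injOn axisPoint (fun k hk => hX ?_) fun k _ k' _ h => ?_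
      · have hk : k + 1 < 2 ^ τ := by simp at hk; omega
        have hτ : τ ≠ 0 := by rintro rfl; simp at hk
        refine ⟨Function.update (fun _ => 1) j₀ τ, fun j => ?_, ?_, fun j => ?_⟩
        · rcases eq_or_ne j j₀ with rfl | hj
          · simpa using Nat.one_le_iff_ne_zero.mpr hτ
          · simp [hj]
        · rw [Finset.sum_update_of_mem (Finset.mem_univ _)]
          have : (Finset.univ \ {j₀}).card = d - 1 := by simp [Finset.card_sdiff]
          simp only [Finset.sum_const, smul_eq_mul, mul_one, this]
          omega
        · rcases eq_or_ne j j₀ with rfl | hj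
          · exact ⟨k + 1, by omega, by simp; omega, by simp [axisPoint]⟩
          · exact ⟨1, le_rfl, by simp [hj], by simp [axisPoint, hj]⟩
      · have := congrFun h j₀
        simp only [axisPoint, Function.update_self] at this
        have := (cpt_strictMono τ).injective this
        omega

end SparseGrid

section KernelFactor

variable {p q : ℝ → ℝ}

lemma nonneg_of_continuousOn_Icc {f : ℝ → ℝ} (hf : ContinuousOn f (Icc 0 1))
    (hpos : ∀ x ∈ Ioo (0:ℝ) 1, 0 < f x) {x : ℝ} (hx : x ∈ Icc (0:ℝ) 1) : 0 ≤ f x := by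
  have hclosed := hf.preimage_isClosed_of_isClosed isClosed_Icc (isClosed_Ici (a := (0:ℝ)))
  have hsub : closure (Ioo (0:ℝ) 1) ⊆ Icc 0 1 ∩ f ⁻¹' Ici 0 :=
    closure_minimal (fun y hy => ⟨Ioo_subset_Icc_self hy, (hpos y hy).le⟩) hclosed
  rw [closure_Ioo zero_ne_one] at hsub
  exact (hsub hx).2

/-- At the endpoints one factor may vanish, but the determinant condition forces the other
one to be positive. -/
lemma add_pos_of_det_pos (hcp : ContinuousOn p (Icc 0 1)) (hcq : ContinuousOn q (Icc 0 1))
    (hpp : ∀ x ∈ Ioo (0:ℝ) 1, 0 < p x) (hpq : ∀ x ∈ Ioo (0:ℝ) 1, 0 < q x) (hdet : DetPos p q)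
    {x : ℝ} (hx : x ∈ Icc (0:ℝ) 1) : 0 < p x + q x := by
  have hp := nonneg_of_continuousOn_Icc hcp hpp hx
  have hq := nonneg_of_continuousOn_Icc hcq hpq hx
  have hmid : (1 / 2 : ℝ) ∈ Ioo (0:ℝ) 1 := by norm_num
  have hph := hpp _ hmid
  have hqh := hpq _ hmid
  rcases lt_trichotomy x (1 / 2) with h | rfl | h
  · have : 0 < p (1 / 2) * q x - p x * q (1 / 2) := hdet hx (Ioo_subset_Icc_self hmid) h
    nlinarith
  · linarith
  · have : 0 < p x * q (1 / 2) - p (1 / 2) * q x := hdet (Ioo_subset_Icc_self hmid) hx h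
    nlinarith

lemma exists_add_le_mul_add (hcp : ContinuousOn p (Icc 0 1)) (hcq : ContinuousOn q (Icc 0 1))
    (hs : ∀ x ∈ Icc (0:ℝ) 1, 0 < p x + q x) :
    ∃ Cs : ℝ, ∀ x ∈ Icc (0:ℝ) 1, ∀ y ∈ Icc (0:ℝ) 1, p x + q x ≤ Cs * (p y + q y) := by
  obtain ⟨A, hA, hmin⟩ := isCompact_Icc.exists_isMinOn (nonempty_Icc.mpr zero_le_one) (hcp.add hcq)
  obtain ⟨B, -, hmax⟩ := isCompact_Icc.exists_isMaxOn (nonempty_Icc.mpr zero_le_one) (hcp.add hcq)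
  refine ⟨(p B + q B) / (p A + q A), fun x hx y hy => ?_⟩
  rw [div_mul_eq_mul_div, le_div_iff₀ (hs A hA)]
  exact mul_le_mul (hmax hx) (hmin hy) (hs A hA).le ((hs x hx).le.trans (hmax hx))

end KernelFactor

lemma add_le_div_log_two_mul_log {τ n : ℕ} (d : ℝ) (hd : 0 ≤ d) (hτ : 2 ^ τ - 1 ≤ n)
    (hn : 2 ≤ n) : (τ : ℝ) + d ≤ (d + 2) / Real.log 2 * Real.log n := by
  have hlog2 : 0 < Real.log 2 := Real.log_pos one_lt_two
  have h2n : Real.log 2 ≤ Real.log n := Real.log_le_log two_pos (by exact_mod_cast hn)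
  have hpow : ((2 ^ τ : ℕ) : ℝ) ≤ 2 * n := by
    have := Nat.one_le_two_pow (n := τ)
    exact_mod_cast (by omega : 2 ^ τ ≤ 2 * n)
  have hτlog : τ * Real.log 2 ≤ Real.log 2 + Real.log n := by
    rw [← Real.log_pow, ← Real.log_mul two_ne_zero (by positivity)]
    exact Real.log_le_log (by positivity) (by exact_mod_cast hpow)
  rw [div_mul_eq_mul_div, le_div_iff₀ hlog2]
  nlinarith [mul_le_mul_of_nonneg_left h2n hd]

section SupBound

variable {d : ℕ} {p q : Fin d → ℝ → ℝ} {Cs : Fin d → ℝ}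

lemma abs_hatSum_le (hdet : ∀ j, DetPos (p j) (q j))
    (hs : ∀ j, ∀ y ∈ Icc (0:ℝ) 1, 0 < p j y + q j y)
    (hCs : ∀ j, ∀ y ∈ Icc (0:ℝ) 1, ∀ y' ∈ Icc (0:ℝ) 1, p j y + q j y ≤ Cs j * (p j y' + q j y'))
    {X : Finset (Fin d → ℝ)} {τ m : ℕ} (hX : SGset d τ ⊆ X) {L Idx : Fin m → Fin d → ℕ}
    {a : Fin m → ℝ} (hT : ∀ t, (∀ j, 1 ≤ L t j) ∧ Idx t ∈ rho (L t) ∧ cpoint (L t) (Idx t) ∈ X)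
    (hlev : ∀ t, ∑ j, L t j ≤ τ + d) {Bd : ℝ} (hBd0 : 0 ≤ Bd)
    (hBd : ∀ y ∈ X, |∑ t, a t * phiD p q (L t) (Idx t) y| ≤ Bd)
    {z : Fin d → ℝ} (hz : ∀ j, z j ∈ Icc (0:ℝ) 1) :
    |∑ t, a t * phiD p q (L t) (Idx t) z| ≤
      ((τ + d : ℕ) : ℝ) ^ d * ((∏ j, (1 + 2 * Cs j) * Cs j) * Bd) := by
  have hCs0 j : 0 ≤ Cs j := zero_le_one.trans (one_le_of_forall_add_le_mul_add (hs j) (hCs j))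
  have hrho t : Idx t ∈ rho (L t) := (hT t).2.1
  have hsurplus : ∀ pr ∈ Finset.univ.image (fun t => (L t, Idx t)),
      |hierarchicalSurplus p q pr.1 pr.2 (fun x => ∑ t, a t * phiD p q (L t) (Idx t) x)|
        ≤ (∏ j, (1 + 2 * Cs j)) * Bd := by
    refine Finset.forall_mem_image.mpr fun t _ => ?_
    refine (abs_hierarchicalSurplus_le (abs_hatSum_stencilPoint_le hrho hX hBd0 hBd (hT t).1
      (hrho t) (hlev t) (hT t).2.2)).trans ?_
    gcongr with j
    exact sum_abs_stencilWeight_le (hdet j) (hs j) (hCs j) (hrho t j).1.pos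
      (lt_two_pow_of_mem_rho (hrho t) j)
  have hphi : ∀ pr ∈ Finset.univ.image (fun t => (L t, Idx t)),
      |phiD p q pr.1 pr.2 z| ≤ ∏ j, Cs j :=
    Finset.forall_mem_image.mpr fun t _ => abs_phiD_le hdet hs hCs (hrho t) hz
  have hlevels : ∀ pr ∈ Finset.univ.image (fun t => (L t, Idx t)),
      (∀ j, 1 ≤ pr.1 j ∧ pr.1 j ≤ τ + d) ∧ ∀ j, Odd (pr.2 j) :=
    Finset.forall_mem_image.mpr fun t _ => ⟨fun j => ⟨(hT t).1 j,
      (Finset.single_le_sum (fun _ _ => Nat.zero_le _) (Finset.mem_univ j)).trans (hlev t)⟩,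
      fun j => (hrho t j).1⟩
  rw [hatSum_eq_sum_hierarchicalSurplus L Idx a hdet hrho]
  calc _ ≤ _ := abs_sum_mul_le_card_filter_mul _ hsurplus hphi
    _ ≤ ((τ + d : ℕ) : ℝ) ^ d * ((∏ j, (1 + 2 * Cs j)) * Bd * ∏ j, Cs j) := by
      gcongr
      · exact mul_nonneg (mul_nonneg (Finset.prod_nonneg fun j _ => by linarith [hCs0 j]) hBd0)
          (Finset.prod_nonneg fun j _ => hCs0 j)
      · exact_mod_cast card_filter_phiD_ne_zero_le hlevels z
    _ = _ := by rw [Finset.prod_mul_distrib]; ring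

end SupBound

/-- **Lemma EC.4, Ding & Zhang.** For a TM kernel satisfying Assumption SL, any function `g`
in the span of the hat functions `φ_{l,i}` with `c_{l,i}` in a TSG `X` of size `n` satisfies
`sup_{z ∈ (0,1)^d} |g(z)| ≤ C (log n)^d max_{y ∈ X} |g(y)|`, with `C` depending only on `k`
and `d`.  (The maximum is expressed via an arbitrary upper bound `Bd` of `|g|` on `X`.) -/
theorem hat_span_sup_bound (d : ℕ) (hd : 1 ≤ d) (κ : TMKernelSL d) :
    ∃ C : ℝ, 0 < C ∧
      ∀ n : ℕ, 2 ≤ n → ∀ X : Finset (Fin d → ℝ), X.card = n →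
        (∃ τ : ℕ, 1 ≤ τ ∧ (SGset d τ).ncard ≤ n ∧ n < (SGset d (τ + 1)).ncard ∧
          SGset d τ ⊆ ↑X ∧ ↑X ⊆ SGset d (τ + 1)) →
        ∀ (m : ℕ) (L Idx : Fin m → Fin d → ℕ) (a : Fin m → ℝ),
          (∀ t, (∀ j, 1 ≤ L t j) ∧ Idx t ∈ rho (L t) ∧ cpoint (L t) (Idx t) ∈ X) →
          ∀ Bd : ℝ, (∀ y ∈ X, |∑ t, a t * phiD κ.p κ.q (L t) (Idx t) y| ≤ Bd) →
          ∀ z : Fin d → ℝ, (∀ j, z j ∈ Set.Ioo (0:ℝ) 1) →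
            |∑ t, a t * phiD κ.p κ.q (L t) (Idx t) z| ≤ C * Real.log n ^ d * Bd := by
  have hs j : ∀ x ∈ Icc (0:ℝ) 1, 0 < κ.p j x + κ.q j x := fun _ hx =>
    add_pos_of_det_pos (κ.cont_p j) (κ.cont_q j) (κ.pos_p j) (κ.pos_q j) (κ.det_pos j) hx
  choose Cs hCs using fun j => exists_add_le_mul_add (κ.cont_p j) (κ.cont_q j) (hs j)
  have hCs0 j : 0 < Cs j := one_pos.trans_le (one_le_of_forall_add_le_mul_add (hs j) (hCs j))
  have hK : 0 < ∏ j, (1 + 2 * Cs j) * Cs j := Finset.prod_pos fun j _ => by nlinarith [hCs0 j]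
  refine ⟨((d + 2) / Real.log 2) ^ d * ∏ j, (1 + 2 * Cs j) * Cs j, by positivity, ?_⟩
  rintro n hn X rfl ⟨τ, -, -, -, hlow, hhigh⟩ m L Idx a hT Bd hBd z hz
  have hlev t : ∑ j, L t j ≤ τ + d := (sum_le_of_cpoint_mem_SGset (fun j => ((hT t).2.1 j).1)
    (hhigh (hT t).2.2)).trans (by omega)
  obtain ⟨y₀, hy₀⟩ := Finset.card_pos.mp (by omega : 0 < X.card)
  have hBd0 : 0 ≤ Bd := (abs_nonneg _).trans (hBd y₀ hy₀)
  have hτ := add_le_div_log_two_mul_log d (Nat.cast_nonneg d) (two_pow_sub_one_le_card hd hlow) hn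
  calc _ ≤ ((τ + d : ℕ) : ℝ) ^ d * ((∏ j, (1 + 2 * Cs j) * Cs j) * Bd) :=
        abs_hatSum_le κ.det_pos hs hCs hlow hT hlev hBd0 hBd fun j => Ioo_subset_Icc_self (hz j)
    _ ≤ ((d + 2) / Real.log 2 * Real.log X.card) ^ d * ((∏ j, (1 + 2 * Cs j) * Cs j) * Bd) := by
      gcongr
      push_cast
      exact hτ
    _ = _ := by rw [mul_pow]; ring
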